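/- arXiv:1406.5349 — 8 statements merged into one kernel-verified Lean document; each statement's English description precedes it below -/
import Mathlib

section
/- For all n ≥ 3, the sum of squares R_0^2 + R_1^2 + ... + R_n^2 equals R_{n+2}^2 - R_{n-1}^2 - R_{n-3}^2 + 1. -/
/-- The Van der Laan sequence: R 0 = 0, R 1 = 1, R 2 = 0, R (n+3) = R (n+1) + R n. -/
def vanDerLaan : ℕ → ℤ
  | 0 => 0
  | 1 => 1
  | 2 => 0
  | (n + 3) => vanDerLaan (n + 1) + vanDerLaan n

lemma vanDerLaan_aux (m : ℕ) :
    ∑ k ∈ Finset.range (m + 4), (vanDerLaan k) ^ 2 =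
      (vanDerLaan (m + 5)) ^ 2 - (vanDerLaan (m + 2)) ^ 2 - (vanDerLaan m) ^ 2 + 1 := by
  induction m with
  | zero =>
    simp [Finset.sum_range_succ]
    decide
  | succ m ih =>
    rw [show m + 1 + 4 = (m + 4) + 1 from rfl, Finset.sum_range_succ, ih]
    have h6 : vanDerLaan (m + 6) = vanDerLaan (m + 4) + vanDerLaan (m + 3) := rfl
    have h5 : vanDerLaan (m + 5) = vanDerLaan (m + 3) + vanDerLaan (m + 2) := rfl
    have h4 : vanDerLaan (m + 4) = vanDerLaan (m + 2) + vanDerLaan (m + 1) := rfl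
    have h3 : vanDerLaan (m + 3) = vanDerLaan (m + 1) + vanDerLaan m := rfl
    rw [show m + 1 + 5 = m + 6 from rfl, show m + 1 + 2 = m + 3 from rfl,
      h6, h5, h4, h3]
    ring

theorem vanDerLaan_sum_sq (n : ℕ) (hn : 3 ≤ n) :
    ∑ k ∈ Finset.range (n + 1), (vanDerLaan k) ^ 2 =
      (vanDerLaan (n + 2)) ^ 2 - (vanDerLaan (n - 1)) ^ 2 - (vanDerLaan (n - 3)) ^ 2 + 1 := by
  obtain ⟨m, rfl⟩ : ∃ m, n = m + 3 := ⟨n - 3, by omega⟩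
  have := vanDerLaan_aux m
  simpa [show m + 3 + 1 = m + 4 from rfl, show m + 3 + 2 = m + 5 from rfl,
    show m + 3 - 1 = m + 2 from rfl, show m + 3 - 3 = m from rfl] using this
end

section
/- Let C(Z) = circ(Z_0, Z_1, ..., Z_{n-1}) be the n×n circulant matrix whose first row consists of the first n terms of the sequence Z. Then for each j = 0, 1, ..., n-1 with w^{-3j} + w^{-2j} - 1 ≠ 0, the eigenvalue λ_j(C(Z)) = Σ_{k=0}^{n-1} Z_k w^{-jk} equals (Z_n - a + (Z_{n+1} - b)w^{-j} + (Z_{n-1} - c + a)w^{-2j}) / (w^{-3j} + w^{-2j} - 1), where w = e^{2πi/n}. -/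
open Complex in
private lemma aux_sum (Z : ℕ → ℂ) (hrec : ∀ m, Z (m + 3) = Z (m + 1) + Z m)
    (x : ℂ) : ∀ n, 1 ≤ n →
    (∑ k ∈ Finset.range n, Z k * x ^ k) * (x ^ 3 + x ^ 2 - 1) =
      Z n * x ^ n + Z (n + 1) * x ^ (n + 1) + Z (n - 1) * x ^ (n + 2) +
        (Z 0 - Z 2) * x ^ 2 - Z 0 - Z 1 * x := by
  intro n hn
  induction n, hn using Nat.le_induction with
  | base => simp [Finset.sum_range_one, hrec 0]; ring
  | succ n hn ih =>
    obtain ⟨m, rfl⟩ := Nat.exists_eq_add_of_le hn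
    simp only [Nat.add_comm 1 m] at *
    rw [Finset.sum_range_succ, add_mul, ih]
    rw [show m + 1 + 1 - 1 = m + 1 from rfl, show m + 1 - 1 = m from rfl,
      show m + 1 + 1 + 1 = m + 3 from rfl, hrec m]
    ring

open Complex in
/-- The eigenvalues of the circulant matrix `circ (Z 0, …, Z (n-1))` are
`λ_j = Σ_{k<n} Z k • w^{-jk}`; they are given by the stated closed formula. -/
theorem eigenvalue_circulant_third_order (Z : ℕ → ℂ) (a b c : ℂ)
    (hrec : ∀ m, Z (m + 3) = Z (m + 1) + Z m)
    (h0 : Z 0 = a) (h1 : Z 1 = b) (h2 : Z 2 = c)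
    (n : ℕ) (hn : 1 ≤ n) (j : ℕ) (hj : j < n)
    (w : ℂ) (hw : w = Complex.exp (2 * Real.pi * I / n))
    (hden : w ^ (-(3 * j : ℤ)) + w ^ (-(2 * j : ℤ)) - 1 ≠ 0) :
    ∑ k ∈ Finset.range n, Z k * w ^ (-(j * k : ℤ)) =
      (Z n - a + (Z (n + 1) - b) * w ^ (-(j : ℤ)) + (Z (n - 1) - c + a) * w ^ (-(2 * j : ℤ))) /
        (w ^ (-(3 * j : ℤ)) + w ^ (-(2 * j : ℤ)) - 1) := by
  have hn0 : (n : ℂ) ≠ 0 := Nat.cast_ne_zero.mpr (by omega)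
  have hwn : w ^ n = 1 := by
    rw [hw, ← Complex.exp_nat_mul]
    rw [show (n : ℂ) * (2 * Real.pi * I / n) = 2 * Real.pi * I by field_simp]
    exact Complex.exp_two_pi_mul_I
  have hw0 : w ≠ 0 := by rw [hw]; exact Complex.exp_ne_zero _
  set x : ℂ := w ^ (-(j : ℤ)) with hx
  have key : ∀ m : ℕ, w ^ (-(m * j : ℤ)) = x ^ m := by
    intro m
    rw [hx, ← zpow_natCast (w ^ (-(j:ℤ))) m, ← zpow_mul]
    congr 1; ring
  have hx2 : w ^ (-(2 * j : ℤ)) = x ^ 2 := key 2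
  have hx3 : w ^ (-(3 * j : ℤ)) = x ^ 3 := key 3
  have hxn : x ^ n = 1 := by
    rw [hx, ← zpow_natCast (w ^ (-(j:ℤ))) n, ← zpow_mul, mul_comm, zpow_mul,
      zpow_natCast, hwn, one_zpow]
  have hsum : ∀ k : ℕ, w ^ (-(j * k : ℤ)) = x ^ k := by
    intro k; rw [← key k]; congr 1; ring
  rw [hx2, hx3] at hden ⊢
  simp only [hsum]
  rw [eq_div_iff hden, aux_sum Z hrec x n hn, h0, h1, h2, pow_add, pow_add, hxn, pow_one]
  ring
end

section
/- Let C(R) be the n×n circulant matrix of the first n Van der Laan numbers. Then for each j with w^{-3j} + w^{-2j} - 1 ≠ 0, the eigenvalue λ_j(C(R)) = Σ_{k=0}^{n-1} R_k w^{-jk} equals (R_n + (R_{n+1} - 1)w^{-j} + R_{n-1} w^{-2j}) / (w^{-3j} + w^{-2j} - 1), where w = e^{2πi/n}. -/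
lemma vdl_aux (x : ℂ) : ∀ n : ℕ,
    (x ^ 3 + x ^ 2 - 1) * ∑ k ∈ Finset.range (n + 1), (vanDerLaan k : ℂ) * x ^ k =
      -x + (vanDerLaan (n + 1) : ℂ) * x ^ (n + 1) +
        (vanDerLaan (n + 2) : ℂ) * x ^ (n + 2) + (vanDerLaan n : ℂ) * x ^ (n + 3) := by
  intro n
  induction n with
  | zero => simp [vanDerLaan]
  | succ m ih =>
      rw [Finset.sum_range_succ, mul_add, ih]
      have h3 : vanDerLaan (m + 3) = vanDerLaan (m + 1) + vanDerLaan m := rfl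
      have e1 : m + 1 + 1 = m + 2 := rfl
      have e2 : m + 1 + 2 = m + 3 := rfl
      have e3 : m + 1 + 3 = m + 4 := rfl
      rw [e1, e2, e3, h3]
      push_cast
      ring

open Complex in
theorem eigenvalue_circulant_vanDerLaan
    (n : ℕ) (hn : 1 ≤ n) (j : ℕ) (hj : j < n)
    (w : ℂ) (hw : w = Complex.exp (2 * Real.pi * I / n))
    (hden : w ^ (-(3 * j : ℤ)) + w ^ (-(2 * j : ℤ)) - 1 ≠ 0) :
    ∑ k ∈ Finset.range n, (vanDerLaan k : ℂ) * w ^ (-(j * k : ℤ)) =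
      ((vanDerLaan n : ℂ) + ((vanDerLaan (n + 1) : ℂ) - 1) * w ^ (-(j : ℤ)) +
          (vanDerLaan (n - 1) : ℂ) * w ^ (-(2 * j : ℤ))) /
        (w ^ (-(3 * j : ℤ)) + w ^ (-(2 * j : ℤ)) - 1) := by
  have hw0 : w ≠ 0 := by rw [hw]; exact Complex.exp_ne_zero _
  set x : ℂ := w ^ (-(j : ℤ)) with hx
  have hn0 : (n : ℝ) ≠ 0 := by positivity
  have hnC : (n : ℂ) ≠ 0 := Nat.cast_ne_zero.mpr (by omega)
  have hwn : w ^ (n : ℕ) = 1 := by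
    have h : (n : ℂ) * (2 * Real.pi * I / n) = 2 * Real.pi * I := by field_simp
    rw [hw, ← Complex.exp_nat_mul, h, Complex.exp_two_pi_mul_I]
  have hxn : x ^ n = 1 := by
    rw [hx, ← zpow_natCast (w ^ (-(j:ℤ))) n, ← zpow_mul]
    have : (-(j:ℤ)) * n = n * (-(j:ℤ)) := by ring
    rw [this, zpow_mul, zpow_natCast, hwn, one_zpow]
  have hxk : ∀ k : ℕ, w ^ (-(j * k : ℤ)) = x ^ k := by
    intro k
    rw [hx, ← zpow_natCast (w ^ (-(j:ℤ))) k, ← zpow_mul]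
    congr 1
    ring
  have hx2 : w ^ (-(2 * j : ℤ)) = x ^ 2 := by
    rw [hx, ← zpow_natCast (w ^ (-(j:ℤ))) 2, ← zpow_mul]; congr 1; push_cast; ring
  have hx3 : w ^ (-(3 * j : ℤ)) = x ^ 3 := by
    rw [hx, ← zpow_natCast (w ^ (-(j:ℤ))) 3, ← zpow_mul]; congr 1; push_cast; ring
  have hden' : x ^ 3 + x ^ 2 - 1 ≠ 0 := by rwa [hx3, hx2] at hden
  simp only [hxk, hx2, hx3]
  rw [eq_div_iff hden', mul_comm]
  obtain ⟨m, rfl⟩ : ∃ m, n = m + 1 := ⟨n - 1, by omega⟩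
  rw [vdl_aux x m]
  have hxm1 : x ^ (m + 1) = 1 := hxn
  have hxm2 : x ^ (m + 2) = x := by rw [pow_succ, hxm1, one_mul]
  have hxm3 : x ^ (m + 3) = x ^ 2 := by
    have : m + 3 = (m + 1) + 2 := by ring
    rw [this, pow_add, hxm1, one_mul]
  rw [hxm1, hxm2, hxm3]
  simp only [Nat.add_sub_cancel]
  ring
end

section
/- Let Z be the sequence with Z_{n+3} = Z_{n+1} + Z_n, Z_0 = a, Z_1 = b, Z_2 = c with a, b, c ≥ 0 not all zero (nonnegative reals). Then the spectral norm of the n×n circulant matrix C(Z) = circ(Z_0, ..., Z_{n-1}) equals Z_{n+4} - Z_4 = Σ_{k=0}^{n-1} Z_k. -/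
/-- Spectral norm of the circulant matrix of a nonnegative third-order sequence. -/
theorem spectral_norm_circulant_third_order (Z : ℕ → ℝ) (a b c : ℝ)
    (hrec : ∀ m, Z (m + 3) = Z (m + 1) + Z m)
    (h0 : Z 0 = a) (h1 : Z 1 = b) (h2 : Z 2 = c)
    (ha : 0 ≤ a) (hb : 0 ≤ b) (hc : 0 ≤ c)
    (hne : ¬(a = 0 ∧ b = 0 ∧ c = 0))
    (n : ℕ) (hn : 1 ≤ n)
    (M : Matrix (Fin n) (Fin n) ℝ)
    (hM : ∀ i j : Fin n, M i j = Z ((j - i : Fin n) : ℕ)) :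
    ‖Matrix.toEuclideanCLM (𝕜 := ℝ) M‖ = Z (n + 4) - Z 4 ∧
      Z (n + 4) - Z 4 = ∑ k ∈ Finset.range n, Z k := by
  haveI : NeZero n := ⟨by omega⟩
  -- nonnegativity of Z
  have hZ3 : ∀ k, 0 ≤ Z k ∧ 0 ≤ Z (k + 1) ∧ 0 ≤ Z (k + 2) := by
    intro k
    induction k with
    | zero => exact ⟨h0 ▸ ha, h1 ▸ hb, h2 ▸ hc⟩
    | succ m ih =>
      refine ⟨ih.2.1, ih.2.2, ?_⟩
      rw [show m + 1 + 2 = m + 3 from rfl, hrec m]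
      exact add_nonneg ih.2.1 ih.1
  have hZ : ∀ k, 0 ≤ Z k := fun k => (hZ3 k).1
  -- telescoping sum
  have hsum : ∀ N : ℕ, Z (N + 4) - Z 4 = ∑ k ∈ Finset.range N, Z k := by
    intro N
    induction N with
    | zero => simp
    | succ m ih =>
      rw [Finset.sum_range_succ, ← ih]
      have e1 := hrec (m + 2)
      have e2 := hrec m
      have e3 := hrec (m + 1)
      have : Z (m + 1 + 4) = Z (m + 4) + Z m := by
        have : m + 1 + 4 = m + 2 + 3 := by ring
        rw [this, e1, show m + 2 + 1 = m + 3 from rfl, e2,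
          show m + 4 = m + 1 + 3 from rfl, e3]
        ring
      rw [this]; ring
  set S : ℝ := ∑ k ∈ Finset.range n, Z k with hS
  have hS0 : 0 ≤ S := Finset.sum_nonneg fun k _ => hZ k
  -- row and column sums
  have rowsum : ∀ i : Fin n, ∑ j : Fin n, M i j = S := by
    intro i
    simp only [hM]
    rw [hS, ← Fin.sum_univ_eq_sum_range]
    exact Fintype.sum_equiv (Equiv.subRight i) _ _ (fun j => rfl)
  have colsum : ∀ j : Fin n, ∑ i : Fin n, M i j = S := by
    intro j
    simp only [hM]
    rw [hS, ← Fin.sum_univ_eq_sum_range]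
    exact Fintype.sum_equiv (Equiv.subLeft j) _ _ (fun i => rfl)
  have hMnn : ∀ i j, 0 ≤ M i j := fun i j => (hM i j) ▸ hZ _
  set T := Matrix.toEuclideanCLM (𝕜 := ℝ) M with hT
  have happly : ∀ (x : EuclideanSpace ℝ (Fin n)) (i : Fin n),
      T x i = ∑ j, M i j * x j := fun x i => rfl
  -- upper bound
  have hub : ‖T‖ ≤ S := by
    refine ContinuousLinearMap.opNorm_le_bound T hS0 fun x => ?_
    have hx2 : ∀ y : EuclideanSpace ℝ (Fin n), ‖y‖ = Real.sqrt (∑ i, (y i) ^ 2) := by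
      intro y
      rw [EuclideanSpace.norm_eq]
      congr 1
      exact Finset.sum_congr rfl fun i _ => by rw [Real.norm_eq_abs, sq_abs]
    rw [hx2, hx2]
    rw [← Real.sqrt_sq hS0, ← Real.sqrt_mul (sq_nonneg S)]
    apply Real.sqrt_le_sqrt
    have key : ∀ i : Fin n, (T x i) ^ 2 ≤ S * ∑ j, M i j * (x j) ^ 2 := by
      intro i
      rw [happly, ← rowsum i]
      exact Finset.sum_sq_le_sum_mul_sum_of_sq_eq_mul _
        (fun j _ => hMnn i j) (fun j _ => mul_nonneg (hMnn i j) (sq_nonneg _))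
        (fun j _ => by ring)
    calc ∑ i, (T x i) ^ 2 ≤ ∑ i, S * ∑ j, M i j * (x j) ^ 2 :=
          Finset.sum_le_sum fun i _ => key i
      _ = S * ∑ j, (∑ i, M i j) * (x j) ^ 2 := by
          rw [← Finset.mul_sum, Finset.sum_comm]
          congr 1
          exact Finset.sum_congr rfl fun j _ => (Finset.sum_mul _ _ _).symm
      _ = S ^ 2 * ∑ j, (x j) ^ 2 := by
          simp_rw [colsum]
          rw [← Finset.mul_sum]; ring
  -- lower bound
  have hlb : S ≤ ‖T‖ := by
    set v : EuclideanSpace ℝ (Fin n) := (WithLp.equiv 2 _).symm (fun _ => (1 : ℝ)) with hv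
    have hv1 : ∀ i, v i = 1 := fun i => rfl
    have hvne : v ≠ 0 := by
      intro h
      have h0' : v ⟨0, by omega⟩ = 0 := by rw [h]; rfl
      rw [hv1] at h0'; exact one_ne_zero h0'
    have hTv : T v = S • v := by
      apply PiLp.ext
      intro i
      rw [happly]
      simp only [hv1, mul_one, PiLp.smul_apply, smul_eq_mul, rowsum i]
    have hnv : 0 < ‖v‖ := norm_pos_iff.mpr hvne
    have : ‖T v‖ = S * ‖v‖ := by
      rw [hTv, norm_smul, Real.norm_eq_abs, abs_of_nonneg hS0]
    have hle := T.le_opNorm v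
    rw [this] at hle
    exact le_of_mul_le_mul_right hle hnv
  have hnorm : ‖T‖ = S := le_antisymm hub hlb
  exact ⟨by rw [hnorm, hsum n], hsum n⟩
end

section
/- The spectral norm of the n×n circulant matrix C(R) = circ(R_0, R_1, ..., R_{n-1}) of Van der Laan numbers equals R_{n+4} - 1. -/
/-!
A nonnegative matrix whose row and column sums all equal `s` has spectral norm `s`: the Schur
test (Cauchy–Schwarz in each row) bounds the norm by `s`, and the all-ones vector is an
eigenvector for `s`. Every circulant matrix has all row and column sums equal to the sum of its
first row, which for the Van der Laan numbers is `∑_{k<n} R_k = R_{n+4} - 1`.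
-/

open Finset Matrix

namespace Matrix

variable {n : Type*} [Fintype n] [DecidableEq n]

theorem norm_toEuclideanCLM_le_of_sum_le {M : Matrix n n ℝ} {s : ℝ} (hs : 0 ≤ s)
    (hM : ∀ i j, 0 ≤ M i j) (hrow : ∀ i, ∑ j, M i j ≤ s)
    (hcol : ∀ j, ∑ i, M i j ≤ s) :
    ‖toEuclideanCLM (𝕜 := ℝ) M‖ ≤ s := by
  refine ContinuousLinearMap.opNorm_le_bound _ hs fun x => ?_
  refine le_of_sq_le_sq ?_ (by positivity)
  have hCS (i : n) : (∑ j, M i j * x j) ^ 2 ≤ s * ∑ j, M i j * x j ^ 2 := calc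
    (∑ j, M i j * x j) ^ 2 ≤ (∑ j, M i j) * ∑ j, M i j * x j ^ 2 :=
      sum_sq_le_sum_mul_sum_of_sq_le_mul _ (fun j _ => hM i j)
        (fun j _ => mul_nonneg (hM i j) (sq_nonneg _)) (fun j _ => by ring_nf; rfl)
    _ ≤ s * ∑ j, M i j * x j ^ 2 :=
      mul_le_mul_of_nonneg_right (hrow i) (sum_nonneg fun j _ => mul_nonneg (hM i j) (sq_nonneg _))
  calc ‖toEuclideanCLM (𝕜 := ℝ) M x‖ ^ 2 = ∑ i, (∑ j, M i j * x j) ^ 2 := by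
        simp [EuclideanSpace.real_norm_sq_eq, mulVec, dotProduct]
    _ ≤ ∑ i, s * ∑ j, M i j * x j ^ 2 := sum_le_sum fun i _ => hCS i
    _ = s * ∑ j, (∑ i, M i j) * x j ^ 2 := by rw [← mul_sum, sum_comm]; simp_rw [sum_mul]
    _ ≤ s * ∑ j, s * x j ^ 2 := by gcongr with j; exact hcol j
    _ = (s * ‖x‖) ^ 2 := by rw [mul_pow, EuclideanSpace.real_norm_sq_eq, ← mul_sum]; ring

theorem abs_le_norm_toEuclideanCLM_of_sum_eq [Nonempty n] {M : Matrix n n ℝ} {s : ℝ}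
    (hrow : ∀ i, ∑ j, M i j = s) : |s| ≤ ‖toEuclideanCLM (𝕜 := ℝ) M‖ := by
  set v : EuclideanSpace ℝ n := WithLp.toLp 2 fun _ => 1
  have hv : 0 < ‖v‖ := norm_pos_iff.mpr fun h => by
    simpa [v] using congr_arg (fun w : EuclideanSpace ℝ n => w (Classical.arbitrary n)) h
  have hMv : toEuclideanCLM (𝕜 := ℝ) M v = s • v := by
    ext i; simp [v, mulVec, dotProduct, hrow]
  have := (toEuclideanCLM (𝕜 := ℝ) M).le_opNorm v
  rw [hMv, norm_smul, Real.norm_eq_abs] at this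
  exact le_of_mul_le_mul_right this hv

theorem norm_toEuclideanCLM_eq_of_sum_eq [Nonempty n] {M : Matrix n n ℝ} {s : ℝ}
    (hM : ∀ i j, 0 ≤ M i j) (hrow : ∀ i, ∑ j, M i j = s) (hcol : ∀ j, ∑ i, M i j = s) :
    ‖toEuclideanCLM (𝕜 := ℝ) M‖ = s := by
  have hs : 0 ≤ s := hrow (Classical.arbitrary n) ▸ sum_nonneg fun j _ => hM _ j
  refine le_antisymm
    (norm_toEuclideanCLM_le_of_sum_le hs hM (fun i => (hrow i).le) fun j => (hcol j).le) ?_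
  simpa [abs_of_nonneg hs] using abs_le_norm_toEuclideanCLM_of_sum_eq hrow

theorem norm_toEuclideanCLM_circulant {G : Type*} [AddCommGroup G] [Fintype G] [DecidableEq G]
    {c : G → ℝ} (hc : ∀ g, 0 ≤ c g) :
    ‖toEuclideanCLM (𝕜 := ℝ) (circulant c)‖ = ∑ g, c g :=
  norm_toEuclideanCLM_eq_of_sum_eq (fun _ _ => hc _)
    (fun i => (Equiv.subLeft i).sum_comp c) (fun j => (Equiv.subRight j).sum_comp c)

end Matrix

theorem vanDerLaan_nonneg : ∀ n, 0 ≤ vanDerLaan n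
  | 0 | 1 | 2 => by decide
  | n + 3 => add_nonneg (vanDerLaan_nonneg (n + 1)) (vanDerLaan_nonneg n)

theorem sum_range_vanDerLaan (n : ℕ) :
    ∑ k ∈ range n, vanDerLaan k = vanDerLaan (n + 4) - 1 := by
  induction n with
  | zero => rfl
  | succ n ih =>
    rw [sum_range_succ, ih]
    simp only [vanDerLaan]
    ring

theorem spectral_norm_circulant_vanDerLaan (n : ℕ) (hn : 1 ≤ n)
    (M : Matrix (Fin n) (Fin n) ℝ)
    (hM : ∀ i j : Fin n, M i j = (vanDerLaan ((j - i : Fin n) : ℕ) : ℝ)) :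
    ‖Matrix.toEuclideanCLM (𝕜 := ℝ) M‖ = (vanDerLaan (n + 4) : ℝ) - 1 := by
  have : NeZero n := ⟨by omega⟩
  -- Mathlib's `circulant v` has entries `v (i - j)`
  have hcirc : M = circulant fun g : Fin n => (vanDerLaan ((-g : Fin n) : ℕ) : ℝ) := by
    ext i j; rw [hM, circulant_apply, neg_sub]
  rw [hcirc, norm_toEuclideanCLM_circulant fun g => by exact_mod_cast vanDerLaan_nonneg _,
    Fintype.sum_equiv (Equiv.neg (Fin n)) (fun g => (vanDerLaan (-g : Fin n) : ℝ))
      (fun g => (vanDerLaan g : ℝ)) fun _ => rfl,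
    Fin.sum_univ_eq_sum_range (fun k => (vanDerLaan k : ℝ)), ← Int.cast_sum,
    sum_range_vanDerLaan]
  push_cast; ring
end

section
/- For any complex numbers x, y, z with x ≠ 0 and any n ≥ 1, letting w = e^{2πi/n}, the product ∏_{k=0}^{n-1} (x - y w^{-k} + z w^{-2k}) equals x^n (1 - K^n - L^n + (z/x)^n), where K = (y - sqrt(y^2 - 4xz))/(2x) and L = (y + sqrt(y^2 - 4xz))/(2x), for any fixed choice of square root of y^2 - 4xz. -/
/-! With `K`, `L` the reciprocals of the roots, each factor is `x (1 - K w⁻ᵏ) (1 - L w⁻ᵏ)`,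
and `∏ₖ (1 - a ζᵏ) = 1 - aⁿ` for a primitive `n`-th root of unity `ζ` (evaluate
`Xⁿ - aⁿ = ∏ₖ (X - ζᵏ a)` at `1`); finally `K L = z / x`. -/

open Finset Polynomial

theorem IsPrimitiveRoot.prod_one_sub_mul_pow {R : Type*} [CommRing R] [IsDomain R] {n : ℕ}
    {ζ : R} (hζ : IsPrimitiveRoot ζ n) (hn : 0 < n) (a : R) :
    ∏ k ∈ range n, (1 - a * ζ ^ k) = 1 - a ^ n := by
  simpa [eval_prod, mul_comm] using
    congrArg (eval 1) (X_pow_sub_C_eq_prod hζ hn (rfl : a ^ n = a ^ n)).symm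

theorem sub_mul_add_mul_sq_eq_mul_one_sub_mul_one_sub {R : Type*} [CommRing R]
    {x y z K L : R} (hsum : x * (K + L) = y) (hprod : x * (K * L) = z) (t : R) :
    x - y * t + z * t ^ 2 = x * ((1 - K * t) * (1 - L * t)) := by
  rw [← hsum, ← hprod]
  ring

theorem quadratic_roots_vieta {F : Type*} [Field F] [NeZero (2 : F)] {x y z s : F} (hx : x ≠ 0)
    (hs : s ^ 2 = y ^ 2 - 4 * x * z) :
    x * ((y - s) / (2 * x) + (y + s) / (2 * x)) = y ∧
      x * ((y - s) / (2 * x) * ((y + s) / (2 * x))) = z := by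
  have h2 : (2 : F) ≠ 0 := two_ne_zero
  constructor
  · field_simp
    ring
  · field_simp
    linear_combination -hs

open Complex in
theorem prod_quadratic_roots_of_unity (x y z : ℂ) (hx : x ≠ 0)
    (n : ℕ) (hn : 1 ≤ n)
    (w : ℂ) (hw : w = Complex.exp (2 * Real.pi * I / n))
    (s : ℂ) (hs : s ^ 2 = y ^ 2 - 4 * x * z)
    (K L : ℂ) (hK : K = (y - s) / (2 * x)) (hL : L = (y + s) / (2 * x)) :
    ∏ k ∈ Finset.range n, (x - y * w ^ (-(k : ℤ)) + z * w ^ (-(2 * k : ℤ))) =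
      x ^ n * (1 - K ^ n - L ^ n + (z / x) ^ n) := by
  have hζ : IsPrimitiveRoot w⁻¹ n := hw ▸ (isPrimitiveRoot_exp n (by omega)).inv
  obtain ⟨hsum, hprod⟩ := hK ▸ hL ▸ quadratic_roots_vieta hx hs
  have hzx : z / x = K * L := (div_eq_iff hx).2 (by rw [← hprod]; ring)
  calc ∏ k ∈ range n, (x - y * w ^ (-(k : ℤ)) + z * w ^ (-(2 * k : ℤ)))
      = ∏ k ∈ range n, x * ((1 - K * w⁻¹ ^ k) * (1 - L * w⁻¹ ^ k)) := by
        refine prod_congr rfl fun k _ => ?_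
        rw [← sub_mul_add_mul_sq_eq_mul_one_sub_mul_one_sub hsum hprod]
        simp [zpow_neg, zpow_mul, ← pow_mul, mul_comm]
    _ = x ^ n * ((1 - K ^ n) * (1 - L ^ n)) := by
        rw [prod_mul_distrib, prod_mul_distrib, prod_const, card_range,
          hζ.prod_one_sub_mul_pow (by omega), hζ.prod_one_sub_mul_pow (by omega)]
    _ = x ^ n * (1 - K ^ n - L ^ n + (z / x) ^ n) := by
        rw [hzx]
        ring
end

section
/- Let C(Z) = circ(Z_0, Z_1, ..., Z_{n-1}) be the n×n circulant matrix for the sequence Z with Z_{n+3} = Z_{n+1} + Z_n, Z_0 = a, Z_1 = b, Z_2 = c, and assume Z_n ≠ a. Then det(C(Z)) = (Z_n - a)^n (1 - K^n - L^n + K^n L^n) / ((-1)^n (Q_{-n} - Q_n)), where K and L are the two roots of (Z_n - a)t^2 + (Z_{n+1} - b)t + (Z_{n-1} - c + a) = 0, and Q is the Perrin sequence extended to negative indices (Q_m = α^m + β^m + γ^m for roots α, β, γ of x^3 - x - 1), provided Q_{-n} ≠ Q_n. -/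
open Finset Polynomial

-- product over powers of primitive root
lemma aux_prod_one_sub {n : ℕ} (hn : 0 < n) {ω : ℂ} (hω : IsPrimitiveRoot ω n) (c : ℂ) :
    ∏ m : Fin n, (1 - c * ω ^ (m : ℕ)) = 1 - c ^ n := by
  have h1 := hω.pow_sub_pow_eq_prod_sub_mul (x := (1:ℂ)) (y := c) hn
  rw [one_pow] at h1
  rw [h1]
  refine Finset.prod_bij (fun (m : Fin n) _ => ω ^ (m : ℕ)) ?_ ?_ ?_ ?_
  · intro m _
    rw [Polynomial.mem_nthRootsFinset hn, ← pow_mul, mul_comm, pow_mul, hω.pow_eq_one, one_pow]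
  · intro m _ m' _ h
    exact Fin.ext (hω.pow_inj m.isLt m'.isLt h)
  · intro ζ hζ
    rw [Polynomial.mem_nthRootsFinset hn] at hζ
    have : NeZero n := ⟨hn.ne'⟩
    obtain ⟨i, hi, hie⟩ := hω.eq_pow_of_pow_eq_one hζ
    exact ⟨⟨i, hi⟩, Finset.mem_univ _, hie⟩
  · intro m _
    ring

-- telescoping
lemma aux_telescope (Z : ℕ → ℂ) (hrec : ∀ m, Z (m + 3) = Z (m + 1) + Z m) (t : ℂ) :
    ∀ m : ℕ, (1 - t^2 - t^3) * ∑ k ∈ range (m+1), Z k * t^k =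
      Z 0 + Z 1 * t + (Z 2 - Z 0) * t^2 - Z (m+1) * t^(m+1) - Z (m+2) * t^(m+2)
        - Z m * t^(m+3) := by
  intro m
  induction m with
  | zero =>
    simp only [Finset.sum_range_succ, Finset.sum_range_zero]
    ring
  | succ m ih =>
    rw [Finset.sum_range_succ, mul_add, ih]
    linear_combination (t^(m+3)) * hrec m

lemma aux_vieta (A B C K L : ℂ) (hA : A ≠ 0)
    (hK : A*K^2 + B*K + C = 0) (hL : A*L^2 + B*L + C = 0)
    (hKL : K ≠ L ∨ B^2 - 4*A*C = 0) :
    B = -(A*(K+L)) ∧ C = A*(K*L) := by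
  rcases hKL with hne | hd
  · have h1 : (K - L) * (A*(K+L) + B) = 0 := by linear_combination hK - hL
    have h2 : A*(K+L) + B = 0 :=
      (mul_eq_zero.mp h1).resolve_left (sub_ne_zero.mpr hne)
    constructor
    · linear_combination h2
    · linear_combination hK - K * h2
  · have hKe : (2*A*K + B)^2 = 0 := by linear_combination 4*A*hK + hd
    have hLe : (2*A*L + B)^2 = 0 := by linear_combination 4*A*hL + hd
    have hK0 : 2*A*K + B = 0 := by
      have := pow_eq_zero_iff (n := 2) (by norm_num) |>.mp hKe; exact this
    have hL0 : 2*A*L + B = 0 := by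
      have := pow_eq_zero_iff (n := 2) (by norm_num) |>.mp hLe; exact this
    have hKLeq : K = L := by
      have h2A : (2:ℂ)*A ≠ 0 := by simp [hA]
      exact mul_left_cancel₀ h2A (by linear_combination hK0 - hL0)
    subst hKLeq
    exact ⟨by linear_combination hK0, by linear_combination hK - K * hK0⟩

lemma aux_det_circulant {n : ℕ} (hn : 0 < n) (Z : ℕ → ℂ)
    (M : Matrix (Fin n) (Fin n) ℂ) (hM : ∀ i j : Fin n, M i j = Z ((j - i : Fin n) : ℕ))
    {ω : ℂ} (hω : IsPrimitiveRoot ω n) :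
    M.det = ∏ m : Fin n, ∑ k : Fin n, Z (k : ℕ) * (ω ^ (m : ℕ)) ^ (k : ℕ) := by
  have : NeZero n := ⟨hn.ne'⟩
  set v : Fin n → ℂ := fun i => ω ^ (i : ℕ) with hv
  set V := Matrix.vandermonde v with hVdef
  set d : Fin n → ℂ := fun m => ∑ k : Fin n, Z (k : ℕ) * (ω ^ (m : ℕ)) ^ (k : ℕ) with hd
  have hωn : ω ^ n = 1 := hω.pow_eq_one
  have hmod : ∀ (ζ : ℂ), ζ ^ n = 1 → ∀ x : ℕ, ζ ^ (x % n) = ζ ^ x := by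
    intro ζ hζ x
    conv_rhs => rw [← Nat.div_add_mod x n]
    rw [pow_add, pow_mul, hζ, one_pow, one_mul]
  have hVD : M * V = V * Matrix.diagonal d := by
    ext i m
    rw [Matrix.mul_apply, Matrix.mul_diagonal]
    set ζ : ℂ := ω ^ (m : ℕ) with hζdef
    have hζ : ζ ^ n = 1 := by rw [hζdef, ← pow_mul, mul_comm, pow_mul, hωn, one_pow]
    have hstep : ∀ j : Fin n, M i j * V j m = Z ((j - i : Fin n) : ℕ) * ζ ^ (j : ℕ) := by
      intro j
      rw [hM, hVdef, Matrix.vandermonde_apply, hζdef, hv]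
      rw [← pow_mul, mul_comm ((j:ℕ)) ((m:ℕ)), pow_mul]
    rw [Finset.sum_congr rfl (fun j _ => hstep j)]
    rw [hd, Finset.mul_sum]
    refine Fintype.sum_equiv (Equiv.addRight i) _ _ ?_ |>.symm
    intro k
    simp only [Equiv.coe_addRight]
    rw [add_sub_cancel_right]
    have hval : ((k + i : Fin n) : ℕ) = ((k : ℕ) + (i : ℕ)) % n := Fin.val_add k i
    rw [hval, hmod ζ hζ]
    rw [hVdef, Matrix.vandermonde_apply, hv, ← pow_mul, mul_comm ((i:ℕ)) ((m:ℕ)), pow_mul,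
      ← hζdef, pow_add]
    ring
  have hVne : V.det ≠ 0 := by
    rw [hVdef, Matrix.det_vandermonde]
    refine Finset.prod_ne_zero_iff.mpr fun i _ => Finset.prod_ne_zero_iff.mpr fun j hj => ?_
    rw [Finset.mem_Ioi] at hj
    exact sub_ne_zero.mpr fun h => (Fin.ne_of_gt hj) (Fin.ext (hω.pow_inj j.isLt i.isLt h))
  have hdet : M.det * V.det = V.det * Matrix.det (Matrix.diagonal d) := by
    rw [← Matrix.det_mul, ← Matrix.det_mul, hVD]
  rw [Matrix.det_diagonal] at hdet
  have := mul_right_cancel₀ hVne (hdet.trans (mul_comm _ _))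
  exact this

open Complex in
/-- Determinant of the circulant matrix of a third-order linear recurrent sequence. -/
theorem det_circulant_third_order (Z : ℕ → ℂ) (a b c : ℂ)
    (hrec : ∀ m, Z (m + 3) = Z (m + 1) + Z m)
    (h0 : Z 0 = a) (h1 : Z 1 = b) (h2 : Z 2 = c)
    (α β γ : ℂ)
    (hroots : ∀ x : ℂ, x ^ 3 - x - 1 = (x - α) * (x - β) * (x - γ))
    (Q : ℤ → ℂ) (hQ : ∀ m : ℤ, Q m = α ^ m + β ^ m + γ ^ m)
    (n : ℕ) (hn : 1 ≤ n)
    (hZa : Z n ≠ a)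
    (K L : ℂ)
    (hK : (Z n - a) * K ^ 2 + (Z (n + 1) - b) * K + (Z (n - 1) - c + a) = 0)
    (hL : (Z n - a) * L ^ 2 + (Z (n + 1) - b) * L + (Z (n - 1) - c + a) = 0)
    (hKL : K ≠ L ∨ (Z (n + 1) - b) ^ 2 - 4 * (Z n - a) * (Z (n - 1) - c + a) = 0)
    (hQn : Q (-(n : ℤ)) ≠ Q (n : ℤ))
    (M : Matrix (Fin n) (Fin n) ℂ)
    (hM : ∀ i j : Fin n, M i j = Z ((j - i : Fin n) : ℕ)) :
    M.det = (Z n - a) ^ n * (1 - K ^ n - L ^ n + K ^ n * L ^ n) /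
      ((-1) ^ n * (Q (-(n : ℤ)) - Q (n : ℤ))) := by
  have hn0 : 0 < n := hn
  obtain ⟨p, rfl⟩ : ∃ p, n = p + 1 := ⟨n - 1, (Nat.succ_pred_eq_of_pos hn0).symm⟩
  simp only [Nat.add_sub_cancel] at hK hL hKL
  -- Vieta
  have hA : Z (p+1) - a ≠ 0 := sub_ne_zero.mpr hZa
  obtain ⟨hB, hC⟩ := aux_vieta (Z (p+1) - a) (Z (p+1+1) - b) (Z p - c + a) K L hA hK hL hKL
  -- symmetric functions of the roots
  have hαβγ : α * β * γ = 1 := by linear_combination hroots 0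
  have he1 : α + β + γ = 0 := by
    linear_combination (1/2 : ℂ) * hroots 1 + (1/2 : ℂ) * hroots (-1) - hroots 0
  have he2 : α*β + α*γ + β*γ = -1 := by
    linear_combination (-1/2 : ℂ) * hroots 1 + (1/2 : ℂ) * hroots (-1)
  have h1n : α^(p+1) * β^(p+1) * γ^(p+1) = 1 := by
    rw [← mul_pow, ← mul_pow, hαβγ, one_pow]
  -- primitive root
  obtain ⟨ω, hω⟩ : ∃ ω : ℂ, IsPrimitiveRoot ω (p+1) :=
    ⟨_, Complex.isPrimitiveRoot_exp (p+1) (Nat.succ_ne_zero p)⟩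
  -- determinant via eigenvalues
  have hdet := aux_det_circulant (Nat.succ_pos p) Z M hM hω
  -- per-eigenvalue evaluation
  have hfac : ∀ ζ : ℂ, ζ ^ (p+1) = 1 →
      (∑ k ∈ Finset.range (p+1), Z k * ζ^k) * (1 - ζ^2 - ζ^3) =
        (-(Z (p+1) - a)) * ((1 - K * ζ) * (1 - L * ζ)) := by
    intro ζ hζ1
    have hk := aux_telescope Z hrec ζ p
    have hz2 : ζ^(p+2) = ζ := by
      rw [show p+2 = (p+1)+1 from rfl, pow_succ, hζ1, one_mul]
    have hz3 : ζ^(p+3) = ζ^2 := by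
      rw [show p+3 = (p+1)+2 from rfl, pow_add, hζ1, one_mul]
    rw [hζ1, hz2, hz3] at hk
    rw [mul_comm, hk]
    linear_combination h0 + ζ * h1 - ζ * hB + ζ^2 * (h2 - h0 - hC)
  have hζpow : ∀ m : Fin (p+1), (ω ^ (m : ℕ)) ^ (p+1) = 1 := by
    intro m
    rw [← pow_mul, mul_comm, pow_mul, hω.pow_eq_one, one_pow]
  -- the denominator product
  have hfac3 : ∀ ζ : ℂ, (1 - ζ^2 - ζ^3) = (1 - α*ζ) * ((1 - β*ζ) * (1 - γ*ζ)) := by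
    intro ζ
    linear_combination ζ * he1 - ζ^2 * he2 + ζ^3 * hαβγ
  have hP : (∏ m : Fin (p+1), (1 - (ω ^ (m:ℕ))^2 - (ω ^ (m:ℕ))^3)) =
      Q (-((p+1 : ℕ) : ℤ)) - Q ((p+1 : ℕ) : ℤ) := by
    have hQN : Q ((p+1 : ℕ) : ℤ) = α^(p+1) + β^(p+1) + γ^(p+1) := by
      rw [hQ, zpow_natCast, zpow_natCast, zpow_natCast]
    have hQmN : Q (-((p+1 : ℕ) : ℤ)) = (α^(p+1))⁻¹ + (β^(p+1))⁻¹ + (γ^(p+1))⁻¹ := by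
      rw [hQ, zpow_neg, zpow_neg, zpow_neg, zpow_natCast, zpow_natCast, zpow_natCast]
    have hiα : (α^(p+1))⁻¹ = β^(p+1) * γ^(p+1) :=
      (eq_inv_of_mul_eq_one_left (by linear_combination h1n)).symm
    have hiβ : (β^(p+1))⁻¹ = α^(p+1) * γ^(p+1) :=
      (eq_inv_of_mul_eq_one_left (by linear_combination h1n)).symm
    have hiγ : (γ^(p+1))⁻¹ = α^(p+1) * β^(p+1) :=
      (eq_inv_of_mul_eq_one_left (by linear_combination h1n)).symm
    calc ∏ m : Fin (p+1), (1 - (ω ^ (m:ℕ))^2 - (ω ^ (m:ℕ))^3)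
        = ∏ m : Fin (p+1), ((1 - α*ω^(m:ℕ)) * ((1 - β*ω^(m:ℕ)) * (1 - γ*ω^(m:ℕ)))) :=
          Finset.prod_congr rfl (fun m _ => hfac3 _)
      _ = (1 - α^(p+1)) * ((1 - β^(p+1)) * (1 - γ^(p+1))) := by
          rw [Finset.prod_mul_distrib, Finset.prod_mul_distrib,
            aux_prod_one_sub (Nat.succ_pos p) hω, aux_prod_one_sub (Nat.succ_pos p) hω,
            aux_prod_one_sub (Nat.succ_pos p) hω]
      _ = Q (-((p+1 : ℕ) : ℤ)) - Q ((p+1 : ℕ) : ℤ) := by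
            rw [hQN, hQmN, hiα, hiβ, hiγ]; linear_combination -h1n
  have hPne : Q (-((p+1 : ℕ) : ℤ)) - Q ((p+1 : ℕ) : ℤ) ≠ 0 := sub_ne_zero.mpr hQn
  -- numerator product
  have hnum : M.det * (∏ m : Fin (p+1), (1 - (ω ^ (m:ℕ))^2 - (ω ^ (m:ℕ))^3)) =
      (-(Z (p+1) - a))^(p+1) * ((1 - K^(p+1)) * (1 - L^(p+1))) := by
    rw [hdet, ← Finset.prod_mul_distrib]
    have : ∀ m : Fin (p+1),
        (∑ k : Fin (p+1), Z (k:ℕ) * (ω ^ (m:ℕ)) ^ (k:ℕ)) *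
          (1 - (ω ^ (m:ℕ))^2 - (ω ^ (m:ℕ))^3) =
        (-(Z (p+1) - a)) * ((1 - K * ω^(m:ℕ)) * (1 - L * ω^(m:ℕ))) := by
      intro m
      rw [Fin.sum_univ_eq_sum_range (fun k => Z k * (ω ^ (m:ℕ)) ^ k) (p+1)]
      exact hfac _ (hζpow m)
    rw [Finset.prod_congr rfl (fun m _ => this m), Finset.prod_mul_distrib,
      Finset.prod_const, Finset.card_univ, Fintype.card_fin, Finset.prod_mul_distrib,
      aux_prod_one_sub (Nat.succ_pos p) hω, aux_prod_one_sub (Nat.succ_pos p) hω]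
  rw [hP] at hnum
  have hMdet : M.det = (-(Z (p+1) - a))^(p+1) * ((1 - K^(p+1)) * (1 - L^(p+1))) /
      (Q (-((p+1 : ℕ) : ℤ)) - Q ((p+1 : ℕ) : ℤ)) := by
    rw [eq_div_iff hPne]; exact hnum
  rw [hMdet]
  rw [div_eq_div_iff hPne (mul_ne_zero (pow_ne_zero _ (by norm_num)) hPne)]
  rw [neg_pow]
  set u : ℂ := (-1 : ℂ)^(p+1) with hu
  have hone : u * u = 1 := by rw [hu, ← mul_pow]; norm_num
  linear_combination ((Z (p+1) - a)^(p+1) * (1 - K^(p+1)) * (1 - L^(p+1)) *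
    (Q (-((p+1 : ℕ) : ℤ)) - Q ((p+1 : ℕ) : ℤ))) * hone
end

section
/- For any n ≥ 1 and w = e^{2πi/n}, the product ∏_{j=0}^{n-1} (w^{-3j} + w^{-2j} - 1) equals (-1)^n (Q_{-n} - Q_n), where Q_m = α^m + β^m + γ^m for the roots α, β, γ of x^3 - x - 1 = 0 (i.e., Q is the Perrin sequence extended to negative indices). -/
open Complex Polynomial in
lemma prod_c_sub_pow {n : ℕ} (hn : 0 < n) {ζ : ℂ} (hζ : IsPrimitiveRoot ζ n) (c : ℂ) :
    ∏ j ∈ Finset.range n, (c - ζ ^ j) = c ^ n - 1 := by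
  have hprod := Polynomial.X_pow_sub_one_eq_prod hn hζ
  have heval := congrArg (Polynomial.eval c) hprod
  simp only [eval_sub, eval_pow, eval_X, eval_one, eval_prod, eval_sub, eval_C] at heval
  rw [heval]
  refine Finset.prod_nbij (fun j => ζ ^ j) ?_ ?_ ?_ (fun j _ => rfl)
  · intro j hj
    rw [Polynomial.mem_nthRootsFinset hn, ← pow_mul, mul_comm, pow_mul, hζ.pow_eq_one, one_pow]
  · exact hζ.injOn_pow
  · intro x hx
    rw [Finset.mem_coe, Polynomial.mem_nthRootsFinset hn] at hx
    have : NeZero n := ⟨hn.ne'⟩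
    obtain ⟨i, hi, rfl⟩ := hζ.eq_pow_of_pow_eq_one hx
    exact ⟨i, by simpa using hi, rfl⟩

open Complex in
theorem prod_denominator_eq_perrin (α β γ : ℂ)
    (h : ∀ x : ℂ, x ^ 3 - x - 1 = (x - α) * (x - β) * (x - γ))
    (Q : ℤ → ℂ) (hQ : ∀ m : ℤ, Q m = α ^ m + β ^ m + γ ^ m)
    (n : ℕ) (hn : 1 ≤ n)
    (w : ℂ) (hw : w = Complex.exp (2 * Real.pi * I / n)) :
    ∏ j ∈ Finset.range n, (w ^ (-(3 * j : ℤ)) + w ^ (-(2 * j : ℤ)) - 1) =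
      (-1) ^ n * (Q (-(n : ℤ)) - Q (n : ℤ)) := by
  have h0 := h 0
  have h1 := h 1
  have h2 := h (-1)
  have hs3 : α * β * γ = 1 := by linear_combination h0
  have hs1 : α + β + γ = 0 := by
    linear_combination (1/2 : ℂ) * h1 + (1/2 : ℂ) * h2 - hs3
  have hs2 : α * β + β * γ + γ * α = -1 := by
    linear_combination (1/2 : ℂ) * h2 - (1/2 : ℂ) * h1
  have hα : α ≠ 0 := by rintro rfl; simp at hs3
  have hβ : β ≠ 0 := by rintro rfl; simp at hs3
  have hγ : γ ≠ 0 := by rintro rfl; simp at hs3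
  -- primitive roots of unity
  have hnz : (n : ℕ) ≠ 0 := by omega
  have hprim : IsPrimitiveRoot w n := hw ▸ Complex.isPrimitiveRoot_exp n hnz
  have hprim' : IsPrimitiveRoot w⁻¹ n := hprim.inv
  set u : ℂ := w⁻¹ with hu
  -- rewrite each factor
  have hfac : ∀ z : ℂ, z ^ 3 + z ^ 2 - 1 = (z - β * γ) * (z - α * γ) * (z - α * β) := by
    intro z
    linear_combination z ^ 2 * hs2 + (-(α * β * γ) * z) * hs1 + (α * β * γ + 1) * hs3
  have hterm : ∀ j : ℕ, w ^ (-(3 * j : ℤ)) + w ^ (-(2 * j : ℤ)) - 1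
      = (u ^ j - β * γ) * (u ^ j - α * γ) * (u ^ j - α * β) := by
    intro j
    have e3 : w ^ (-(3 * j : ℤ)) = (u ^ j) ^ 3 := by
      rw [show (-(3 * j : ℤ)) = -((3 * j : ℕ) : ℤ) by push_cast; ring,
        zpow_neg, zpow_natCast, ← inv_pow, ← hu, mul_comm, pow_mul]
    have e2 : w ^ (-(2 * j : ℤ)) = (u ^ j) ^ 2 := by
      rw [show (-(2 * j : ℤ)) = -((2 * j : ℕ) : ℤ) by push_cast; ring,
        zpow_neg, zpow_natCast, ← inv_pow, ← hu, mul_comm, pow_mul]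
    rw [e3, e2, hfac]
  have hflip : ∀ c : ℂ, ∏ j ∈ Finset.range n, (u ^ j - c) = (-1) ^ n * (c ^ n - 1) := by
    intro c
    calc ∏ j ∈ Finset.range n, (u ^ j - c)
        = ∏ j ∈ Finset.range n, (-1) * (c - u ^ j) := by
          apply Finset.prod_congr rfl; intros; ring
      _ = (-1) ^ n * ∏ j ∈ Finset.range n, (c - u ^ j) := by
          rw [Finset.prod_mul_distrib, Finset.prod_const, Finset.card_range]
      _ = (-1) ^ n * (c ^ n - 1) := by rw [prod_c_sub_pow (by omega) hprim']
  calc ∏ j ∈ Finset.range n, (w ^ (-(3 * j : ℤ)) + w ^ (-(2 * j : ℤ)) - 1)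
      = ∏ j ∈ Finset.range n,
          ((u ^ j - β * γ) * (u ^ j - α * γ) * (u ^ j - α * β)) := by
        exact Finset.prod_congr rfl fun j _ => hterm j
    _ = (∏ j ∈ Finset.range n, (u ^ j - β * γ)) * (∏ j ∈ Finset.range n, (u ^ j - α * γ))
        * (∏ j ∈ Finset.range n, (u ^ j - α * β)) := by
        rw [Finset.prod_mul_distrib, Finset.prod_mul_distrib]
    _ = (-1) ^ n * (((β * γ) ^ n - 1) * (((α * γ) ^ n - 1) * ((α * β) ^ n - 1))) := by
        rw [hflip, hflip, hflip]
        have hsq : ((-1 : ℂ) ^ n) ^ 2 = 1 := by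
          rw [← pow_mul, mul_comm, pow_mul, neg_one_sq, one_pow]
        ring_nf
        linear_combination (((β*γ)^n - 1) * ((α*γ)^n - 1) * ((α*β)^n - 1) * (-1:ℂ)^n) * hsq
    _ = (-1) ^ n * (Q (-(n : ℤ)) - Q (n : ℤ)) := by
        congr 1
        rw [hQ, hQ]
        have ha : α ^ n ≠ 0 := pow_ne_zero _ hα
        have hb : β ^ n ≠ 0 := pow_ne_zero _ hβ
        have hc : γ ^ n ≠ 0 := pow_ne_zero _ hγ
        have habc : α ^ n * β ^ n * γ ^ n = 1 := by
          rw [← mul_pow, ← mul_pow, hs3, one_pow]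
        have hza : (α : ℂ) ^ (-(n : ℤ)) = (α ^ n)⁻¹ := by rw [zpow_neg, zpow_natCast]
        have hzb : (β : ℂ) ^ (-(n : ℤ)) = (β ^ n)⁻¹ := by rw [zpow_neg, zpow_natCast]
        have hzc : (γ : ℂ) ^ (-(n : ℤ)) = (γ ^ n)⁻¹ := by rw [zpow_neg, zpow_natCast]
        have hia : (α ^ n)⁻¹ = β ^ n * γ ^ n := by
          field_simp; linear_combination -habc
        have hib : (β ^ n)⁻¹ = α ^ n * γ ^ n := by
          field_simp; linear_combination -habc
        have hic : (γ ^ n)⁻¹ = α ^ n * β ^ n := by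
          field_simp; linear_combination -habc
        rw [hza, hzb, hzc, hia, hib, hic, zpow_natCast, zpow_natCast, zpow_natCast,
          mul_pow, mul_pow, mul_pow]
        linear_combination (α ^ n * β ^ n * γ ^ n + 1 - α ^ n - β ^ n - γ ^ n) * habc
end
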